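/- arXiv:0902.3383 — 2 statements merged into one kernel-verified Lean document; each statement's English description precedes it below -/
import Mathlib

section
/- Poisson bracket identity for the convexified logarithmic weight: Let x₀ ∈ ℝ³, φ(x) = log|x−x₀| on ℝ³ ∖ {x₀}, s > 0, f(λ) = λ + s λ²/2, and φ̃ = f∘φ. Define on (ℝ³ ∖ {x₀}) × ℝ³ the symbols a(x,ξ) = |ξ|² − |∇φ̃(x)|² and b(x,ξ) = 2 ∇φ̃(x)·ξ, and the Poisson bracket {a,b}(x,ξ) = ∇_ξ a(x,ξ)·∇_x b(x,ξ) − ∇_x a(x,ξ)·∇_ξ b(x,ξ). Then at every point (x,ξ) with x ≠ x₀ and 1 + s φ(x) ≠ 0, one has {a,b}(x,ξ) = 4 s f′(φ(x))² |∇φ(x)|⁴ + m(x) a(x,ξ) + l(x,ξ) b(x,ξ), where m(x) = −4 f′(φ(x)) D²φ(x)(∇φ(x), ∇φ(x)) / |∇φ(x)|², and l(x,ξ) = 4 D²φ(x)(∇φ(x), ξ)/|∇φ(x)|² + 2 (f″(φ(x))/f′(φ(x))) ∇φ(x)·ξ. -/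
noncomputable section

open scoped RealInnerProductSpace

/-- Euclidean space `ℝ³`. -/
abbrev E3 : Type := EuclideanSpace ℝ (Fin 3)

/-- The logarithmic Carleman weight `φ(x) = log|x − x₀|`. -/
def logPhi (x₀ : E3) (x : E3) : ℝ := Real.log ‖x - x₀‖

/-- The convexified weight `φ̃ = f ∘ φ` with `f(λ) = λ + s λ²/2`. -/
def logPhiT (x₀ : E3) (s : ℝ) (x : E3) : ℝ := logPhi x₀ x + s * (logPhi x₀ x) ^ 2 / 2

/-- The gradient `∇φ(x) = (x − x₀)/|x − x₀|²` of the logarithmic weight. -/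
def gradPhi (x₀ : E3) (x : E3) : E3 := (‖x - x₀‖ ^ 2)⁻¹ • (x - x₀)

/-- The Hessian bilinear form `D²φ(x)(v,w)` of `φ = log|· − x₀|`. -/
def hessPhi (x₀ : E3) (x v w : E3) : ℝ :=
  fderiv ℝ (fun y => fderiv ℝ (logPhi x₀) y w) x v

/-- The symbol `a(x,ξ) = |ξ|² − |∇φ̃(x)|²`. -/
def symA (x₀ : E3) (s : ℝ) (x ξ : E3) : ℝ :=
  ‖ξ‖ ^ 2 - ‖gradient (logPhiT x₀ s) x‖ ^ 2

/-- The symbol `b(x,ξ) = 2 ∇φ̃(x)·ξ`. -/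
def symB (x₀ : E3) (s : ℝ) (x ξ : E3) : ℝ :=
  2 * ⟪gradient (logPhiT x₀ s) x, ξ⟫

/-- The Poisson bracket `{a,b}(x,ξ) = ∇_ξ a·∇_x b − ∇_x a·∇_ξ b`. -/
def pbracket (x₀ : E3) (s : ℝ) (x ξ : E3) : ℝ :=
  ⟪gradient (fun η => symA x₀ s x η) ξ, gradient (fun y => symB x₀ s y ξ) x⟫
    - ⟪gradient (fun y => symA x₀ s y ξ) x, gradient (fun η => symB x₀ s x η) ξ⟫

lemma hasGradientAt_of_fderiv {f : E3 → ℝ} {D : E3 →L[ℝ] ℝ} {w x : E3}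
    (h : HasFDerivAt f D x) (hw : ∀ v, D v = ⟪w, v⟫) : HasGradientAt f w x := by
  rw [hasGradientAt_iff_hasFDerivAt]
  refine h.congr_fderiv ?_
  ext v
  rw [InnerProductSpace.toDual_apply_apply, hw]

lemma rsq_ne (x₀ x : E3) (hx : x ≠ x₀) : ‖x - x₀‖ ^ 2 ≠ 0 := by
  have h : x - x₀ ≠ 0 := sub_ne_zero.mpr hx
  exact pow_ne_zero _ (norm_ne_zero_iff.mpr h)

lemma hasFDerivAt_rsq (x₀ x : E3) :
    HasFDerivAt (fun y : E3 => ‖y - x₀‖ ^ 2)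
      (2 • (innerSL ℝ (x - x₀)).comp (ContinuousLinearMap.id ℝ E3)) x :=
  ((hasFDerivAt_id x).sub_const x₀).norm_sq

lemma hasFDerivAt_logPhi (x₀ x : E3) (hx : x ≠ x₀) :
    HasFDerivAt (logPhi x₀) ((‖x - x₀‖ ^ 2)⁻¹ • innerSL ℝ (x - x₀)) x := by
  have hr0 := rsq_ne x₀ x hx
  have h := ((hasFDerivAt_rsq x₀ x).log hr0).const_mul (2⁻¹ : ℝ)
  have heq : logPhi x₀ = fun y => 2⁻¹ * Real.log (‖y - x₀‖ ^ 2) := by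
    funext y; rw [logPhi, Real.log_pow]; push_cast; ring
  rw [heq]
  refine h.congr_fderiv ?_
  ext v
  simp
  ring

lemma hasFDerivAt_logPhiT (x₀ : E3) (s : ℝ) (x : E3) (hx : x ≠ x₀) :
    HasFDerivAt (logPhiT x₀ s)
      (((1 + s * logPhi x₀ x) * (‖x - x₀‖ ^ 2)⁻¹) • innerSL ℝ (x - x₀)) x := by
  have hφ := hasFDerivAt_logPhi x₀ x hx
  have h := hφ.add ((hφ.mul hφ).const_mul (s / 2))
  have heq : logPhiT x₀ s = fun y => logPhi x₀ y + s / 2 * (logPhi x₀ y * logPhi x₀ y) := by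
    funext y; rw [logPhiT]; ring
  rw [heq]
  refine h.congr_fderiv ?_
  ext v
  simp only [ContinuousLinearMap.smul_apply, ContinuousLinearMap.add_apply,
    ContinuousLinearMap.comp_apply, ContinuousLinearMap.coe_id', id_eq,
    ContinuousLinearMap.coe_smul', Pi.smul_apply, innerSL_apply_apply, smul_eq_mul]
  ring

lemma gradient_logPhiT (x₀ : E3) (s : ℝ) (x : E3) (hx : x ≠ x₀) :
    gradient (logPhiT x₀ s) x = (1 + s * logPhi x₀ x) • gradPhi x₀ x := by
  refine (hasGradientAt_of_fderiv (hasFDerivAt_logPhiT x₀ s x hx) ?_).gradient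
  intro v
  simp only [gradPhi, ContinuousLinearMap.smul_apply, innerSL_apply_apply, smul_eq_mul,
    real_inner_smul_left]
  ring

lemma norm_gradPhi_sq (x₀ x : E3) (hx : x ≠ x₀) :
    ‖gradPhi x₀ x‖ ^ 2 = (‖x - x₀‖ ^ 2)⁻¹ := by
  have hr0 := rsq_ne x₀ x hx
  rw [gradPhi, norm_smul, mul_pow, Real.norm_eq_abs, sq_abs]
  field_simp

lemma hasFDerivAt_rinv (x₀ x : E3) (hx : x ≠ x₀) :
    HasFDerivAt (fun y : E3 => (‖y - x₀‖ ^ 2)⁻¹)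
      ((-((‖x - x₀‖ ^ 2) ^ 2)⁻¹ * 2) • innerSL ℝ (x - x₀)) x := by
  have h := (hasDerivAt_inv (rsq_ne x₀ x hx)).comp_hasFDerivAt x (hasFDerivAt_rsq x₀ x)
  refine h.congr_fderiv ?_
  ext v
  simp only [ContinuousLinearMap.smul_apply, ContinuousLinearMap.comp_apply,
    ContinuousLinearMap.coe_id', id_eq, innerSL_apply_apply, smul_eq_mul, nsmul_eq_mul,
    Nat.cast_ofNat]
  ring

lemma hasFDerivAt_inner_const (x₀ ξ x : E3) :
    HasFDerivAt (fun y : E3 => ⟪y - x₀, ξ⟫) (innerSL ℝ ξ) x := by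
  have h := ((hasFDerivAt_id x).sub_const x₀).inner ℝ (hasFDerivAt_const ξ x)
  refine h.congr_fderiv ?_
  ext v
  simp only [innerSL_apply_apply, ContinuousLinearMap.comp_apply, ContinuousLinearMap.prod_apply,
    ContinuousLinearMap.coe_id', id_eq, ContinuousLinearMap.coe_zero', Pi.zero_apply,
    fderivInnerCLM_apply, inner_zero_right, zero_add]
  exact real_inner_comm _ _

lemma gradA (x₀ : E3) (s : ℝ) (x ξ : E3) (hx : x ≠ x₀) :
    HasGradientAt
      (fun y => ‖ξ‖ ^ 2 - (1 + s * logPhi x₀ y) * (1 + s * logPhi x₀ y) * (‖y - x₀‖ ^ 2)⁻¹)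
      (((2 * (1 + s * logPhi x₀ x) ^ 2 - 2 * s * (1 + s * logPhi x₀ x)) *
          ((‖x - x₀‖ ^ 2)⁻¹) ^ 2) • (x - x₀)) x := by
  have hφ := hasFDerivAt_logPhi x₀ x hx
  have hc := (hφ.const_mul s).const_add 1
  have hinv := hasFDerivAt_rinv x₀ x hx
  refine hasGradientAt_of_fderiv (((hc.mul hc).mul hinv).const_sub (‖ξ‖ ^ 2)) ?_
  intro v
  simp only [ContinuousLinearMap.smul_apply, ContinuousLinearMap.add_apply,
    ContinuousLinearMap.neg_apply, innerSL_apply_apply, smul_eq_mul, real_inner_smul_left, Pi.mul_apply]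
  ring

lemma gradB (x₀ : E3) (s : ℝ) (x ξ : E3) (hx : x ≠ x₀) :
    HasGradientAt
      (fun y => 2 * ((1 + s * logPhi x₀ y) * ((‖y - x₀‖ ^ 2)⁻¹ * ⟪y - x₀, ξ⟫)))
      (((2 * s - 4 * (1 + s * logPhi x₀ x)) * (((‖x - x₀‖ ^ 2)⁻¹) ^ 2 * ⟪x - x₀, ξ⟫)) • (x - x₀)
        + (2 * (1 + s * logPhi x₀ x) * (‖x - x₀‖ ^ 2)⁻¹) • ξ) x := by
  have hφ := hasFDerivAt_logPhi x₀ x hx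
  have hc := (hφ.const_mul s).const_add 1
  have hinv := hasFDerivAt_rinv x₀ x hx
  have hP := hasFDerivAt_inner_const x₀ ξ x
  refine hasGradientAt_of_fderiv ((hc.mul (hinv.mul hP)).const_mul 2) ?_
  intro v
  simp only [ContinuousLinearMap.smul_apply, ContinuousLinearMap.add_apply,
    innerSL_apply_apply, smul_eq_mul, real_inner_smul_left, inner_add_left, Pi.mul_apply]
  ring

lemma hessPhi_eq (x₀ x : E3) (hx : x ≠ x₀) (v w : E3) :
    hessPhi x₀ x v w = (‖x - x₀‖ ^ 2)⁻¹ * ⟪v, w⟫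
      - 2 * ((‖x - x₀‖ ^ 2)⁻¹) ^ 2 * ⟪x - x₀, v⟫ * ⟪x - x₀, w⟫ := by
  have hmem : {y : E3 | y ≠ x₀} ∈ nhds x := isOpen_compl_singleton.mem_nhds hx
  have hev : (fun y => fderiv ℝ (logPhi x₀) y w) =ᶠ[nhds x]
      (fun y => (‖y - x₀‖ ^ 2)⁻¹ * ⟪y - x₀, w⟫) := by
    filter_upwards [hmem] with y hy
    rw [(hasFDerivAt_logPhi x₀ y hy).fderiv]
    simp only [ContinuousLinearMap.smul_apply, innerSL_apply_apply, smul_eq_mul]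
  rw [hessPhi, hev.fderiv_eq,
    HasFDerivAt.fderiv (f := fun y => (‖y - x₀‖ ^ 2)⁻¹ * ⟪y - x₀, w⟫)
      ((hasFDerivAt_rinv x₀ x hx).mul (hasFDerivAt_inner_const x₀ w x))]
  simp only [ContinuousLinearMap.smul_apply, ContinuousLinearMap.add_apply,
    innerSL_apply_apply, smul_eq_mul, real_inner_comm v w]
  ring

lemma symA_eq (x₀ : E3) (s : ℝ) (y ξ : E3) (hy : y ≠ x₀) :
    symA x₀ s y ξ
      = ‖ξ‖ ^ 2 - (1 + s * logPhi x₀ y) * (1 + s * logPhi x₀ y) * (‖y - x₀‖ ^ 2)⁻¹ := by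
  rw [symA, gradient_logPhiT _ _ _ hy, norm_smul, mul_pow, Real.norm_eq_abs, sq_abs,
    norm_gradPhi_sq _ _ hy]
  ring

lemma symB_eq (x₀ : E3) (s : ℝ) (y ξ : E3) (hy : y ≠ x₀) :
    symB x₀ s y ξ
      = 2 * ((1 + s * logPhi x₀ y) * ((‖y - x₀‖ ^ 2)⁻¹ * ⟪y - x₀, ξ⟫)) := by
  rw [symB, gradient_logPhiT _ _ _ hy, gradPhi, real_inner_smul_left, real_inner_smul_left]

/-- Poisson bracket identity for the convexified logarithmic weight:
`{a,b} = 4s f′(φ)²|∇φ|⁴ + m a + l b` with `f′(λ) = 1 + sλ`, `f″ = s`,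
`m = −4 f′(φ) D²φ(∇φ,∇φ)/|∇φ|²`, and
`l = 4 D²φ(∇φ,ξ)/|∇φ|² + 2 (f″(φ)/f′(φ)) ∇φ·ξ`. -/
theorem poisson_bracket_identity (x₀ : E3) (s : ℝ) (hs : 0 < s) :
    ∀ x ξ : E3, x ≠ x₀ → 1 + s * logPhi x₀ x ≠ 0 →
      pbracket x₀ s x ξ
        = 4 * s * (1 + s * logPhi x₀ x) ^ 2 * ‖gradPhi x₀ x‖ ^ 4
          + (-4 * (1 + s * logPhi x₀ x) *
                hessPhi x₀ x (gradPhi x₀ x) (gradPhi x₀ x) / ‖gradPhi x₀ x‖ ^ 2)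
              * symA x₀ s x ξ
          + (4 * hessPhi x₀ x (gradPhi x₀ x) ξ / ‖gradPhi x₀ x‖ ^ 2
                + 2 * (s / (1 + s * logPhi x₀ x)) * ⟪gradPhi x₀ x, ξ⟫)
              * symB x₀ s x ξ := by
  intro x ξ hx hc0
  have hr0 := rsq_ne x₀ x hx
  have hmem : {y : E3 | y ≠ x₀} ∈ nhds x := isOpen_compl_singleton.mem_nhds hx
  have g1 : gradient (fun η => symA x₀ s x η) ξ = (2 : ℝ) • ξ := by
    refine HasGradientAt.gradient ?_
    simp only [symA]
    refine hasGradientAt_of_fderiv ((hasFDerivAt_id ξ).norm_sq.sub_const _) ?_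
    intro v
    simp only [ContinuousLinearMap.smul_apply, ContinuousLinearMap.comp_apply,
      ContinuousLinearMap.coe_id', id_eq, innerSL_apply_apply, smul_eq_mul, nsmul_eq_mul,
      Nat.cast_ofNat, real_inner_smul_left]
  have g2 : gradient (fun η => symB x₀ s x η) ξ = (2 : ℝ) • gradient (logPhiT x₀ s) x := by
    refine HasGradientAt.gradient ?_
    simp only [symB]
    refine hasGradientAt_of_fderiv
      ((ContinuousLinearMap.hasFDerivAt (innerSL ℝ (gradient (logPhiT x₀ s) x))).const_mul 2) ?_
    intro v
    simp only [ContinuousLinearMap.smul_apply, innerSL_apply_apply, smul_eq_mul,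
      real_inner_smul_left]
  have hevA : (fun y => symA x₀ s y ξ) =ᶠ[nhds x]
      (fun y => ‖ξ‖ ^ 2 - (1 + s * logPhi x₀ y) * (1 + s * logPhi x₀ y) * (‖y - x₀‖ ^ 2)⁻¹) := by
    filter_upwards [hmem] with y hy
    exact symA_eq x₀ s y ξ hy
  have hevB : (fun y => symB x₀ s y ξ) =ᶠ[nhds x]
      (fun y => 2 * ((1 + s * logPhi x₀ y) * ((‖y - x₀‖ ^ 2)⁻¹ * ⟪y - x₀, ξ⟫))) := by
    filter_upwards [hmem] with y hy
    exact symB_eq x₀ s y ξ hy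
  have g3 : gradient (fun y => symA x₀ s y ξ) x
      = ((2 * (1 + s * logPhi x₀ x) ^ 2 - 2 * s * (1 + s * logPhi x₀ x)) *
          ((‖x - x₀‖ ^ 2)⁻¹) ^ 2) • (x - x₀) :=
    (HasGradientAt.congr_of_eventuallyEq (gradA x₀ s x ξ hx) hevA).gradient
  have g4 : gradient (fun y => symB x₀ s y ξ) x
      = ((2 * s - 4 * (1 + s * logPhi x₀ x)) * (((‖x - x₀‖ ^ 2)⁻¹) ^ 2 * ⟪x - x₀, ξ⟫)) • (x - x₀)
        + (2 * (1 + s * logPhi x₀ x) * (‖x - x₀‖ ^ 2)⁻¹) • ξ :=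
    (HasGradientAt.congr_of_eventuallyEq (gradB x₀ s x ξ hx) hevB).gradient
  have h4 : ‖gradPhi x₀ x‖ ^ 4 = ((‖x - x₀‖ ^ 2)⁻¹) ^ 2 := by
    rw [show (4 : ℕ) = 2 * 2 from rfl, pow_mul, norm_gradPhi_sq x₀ x hx]
  rw [pbracket, g1, g2, g3, g4, gradient_logPhiT x₀ s x hx, symA_eq x₀ s x ξ hx,
    symB_eq x₀ s x ξ hx, hessPhi_eq x₀ x hx, hessPhi_eq x₀ x hx, h4,
    norm_gradPhi_sq x₀ x hx, gradPhi]
  simp only [inner_add_left, inner_add_right, real_inner_smul_left, real_inner_smul_right,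
    real_inner_comm ξ (x - x₀)]
  simp only [real_inner_self_eq_norm_sq]
  set r := ‖x - x₀‖ ^ 2 with hr
  set P : ℝ := ⟪x - x₀, ξ⟫ with hP
  set Q := ‖ξ‖ ^ 2 with hQ
  set L := logPhi x₀ x with hL
  field_simp
  ring
end
end

section
/- Decoupling of the Dirac system into a second-order equation where q₋ does not vanish: let U ⊆ ℝ³ be open, A : U → ℝ³ be C¹, q₊, q₋ : U → ℝ be C¹ with q₋ nonvanishing on U, and u₊, u₋ : U → ℂ² be C². If σ·(D+A)u₊ + q₋ u₋ = 0 and σ·(D+A)u₋ + q₊ u₊ = 0 on U, then on U one has σ·(D+A)( (1/q₋) σ·(D+A)u₊ ) − q₊ u₊ = 0, and u₊ satisfies the expanded second-order equation −Δu₊ − 2i A·∇u₊ + (A·A − i∇·A − q₊q₋) u₊ + (σ·(∇×A)) u₊ − (1/q₋)(σ·Dq₋)(σ·(D+A)u₊) = 0. -/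
noncomputable section

/-- The Pauli matrices. -/
def σ1 : Matrix (Fin 2) (Fin 2) ℂ := !![0, 1; 1, 0]
def σ2 : Matrix (Fin 2) (Fin 2) ℂ := !![0, -Complex.I; Complex.I, 0]
def σ3 : Matrix (Fin 2) (Fin 2) ℂ := !![1, 0; 0, -1]

/-- `σ·a` for `a ∈ ℂ³`. -/
def pauli (a : Fin 3 → ℂ) : Matrix (Fin 2) (Fin 2) ℂ := a 0 • σ1 + a 1 • σ2 + a 2 • σ3

/-- Partial derivative `∂ⱼ` of a real-valued function. -/
def pdR (j : Fin 3) (f : E3 → ℝ) (x : E3) : ℝ := fderiv ℝ f x (EuclideanSpace.single j 1)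

/-- Partial derivative `∂ⱼ` of a `ℂ²`-valued function. -/
def pdV (j : Fin 3) (f : E3 → Fin 2 → ℂ) (x : E3) : Fin 2 → ℂ :=
  fderiv ℝ f x (EuclideanSpace.single j 1)

/-- Laplacian of a `ℂ²`-valued function, componentwise. -/
def lapV (f : E3 → Fin 2 → ℂ) (x : E3) : Fin 2 → ℂ := ∑ j, pdV j (pdV j f) x

/-- `σ·D u = −i(σ₁∂₁u + σ₂∂₂u + σ₃∂₃u)`. -/
def sigmaD (u : E3 → Fin 2 → ℂ) (x : E3) : Fin 2 → ℂ :=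
  (-Complex.I) • (σ1.mulVec (pdV 0 u x) + σ2.mulVec (pdV 1 u x) + σ3.mulVec (pdV 2 u x))

/-- The magnetic Dirac operator `σ·(D+A)u = σ·Du + (σ·A)u`. -/
def sigmaDA (A : E3 → Fin 3 → ℝ) (u : E3 → Fin 2 → ℂ) (x : E3) : Fin 2 → ℂ :=
  sigmaD u x + (pauli fun j => (A x j : ℂ)).mulVec (u x)

/-- Divergence `∇·A` of a vector field. -/
def divA (A : E3 → Fin 3 → ℝ) (x : E3) : ℝ := ∑ j, pdR j (fun y => A y j) x

/-- Curl `∇×A` of a vector field. -/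
def curlA (A : E3 → Fin 3 → ℝ) (x : E3) : Fin 3 → ℝ :=
  ![pdR 1 (fun y => A y 2) x - pdR 2 (fun y => A y 1) x,
    pdR 2 (fun y => A y 0) x - pdR 0 (fun y => A y 2) x,
    pdR 0 (fun y => A y 1) x - pdR 1 (fun y => A y 0) x]

/-- The matrix `σ·Dq = −i σ·∇q` for a scalar function `q`. -/
def sigmaDq (q : E3 → ℝ) (x : E3) : Matrix (Fin 2) (Fin 2) ℂ :=
  pauli fun j => -Complex.I * (pdR j q x : ℂ)

/-! ### Auxiliary lemmas -/

/-- Partial derivative `∂ⱼ` of a `ℂ`-valued function. -/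
def pdC (j : Fin 3) (f : E3 → ℂ) (x : E3) : ℂ := fderiv ℝ f x (EuclideanSpace.single j 1)

section Helpers

variable {f g : E3 → Fin 2 → ℂ} {c : E3 → ℂ} {x : E3} {j k : Fin 3}

lemma pdV_congr (h : f =ᶠ[nhds x] g) : pdV j f x = pdV j g x := by
  unfold pdV; rw [h.fderiv_eq]

lemma pdV_neg : pdV j (fun y => -f y) x = -pdV j f x := by
  simp [pdV, fderiv_neg]

lemma pdV_add (hf : DifferentiableAt ℝ f x) (hg : DifferentiableAt ℝ g x) :
    pdV j (fun y => f y + g y) x = pdV j f x + pdV j g x := by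
  simp [pdV, fderiv_fun_add hf hg]

lemma pdV_smul (hc : DifferentiableAt ℝ c x) (hf : DifferentiableAt ℝ f x) :
    pdV j (fun y => c y • f y) x = pdC j c x • f x + c x • pdV j f x := by
  unfold pdV pdC
  rw [fderiv_fun_smul hc hf]
  simp [add_comm]

lemma pdV_const_smul (a : ℂ) (hf : DifferentiableAt ℝ f x) :
    pdV j (fun y => a • f y) x = a • pdV j f x := by
  unfold pdV; rw [fderiv_fun_const_smul hf]; simp

/-- `mulVec` by a fixed matrix, as a continuous `ℝ`-linear map. -/
def mulVecCLM (M : Matrix (Fin 2) (Fin 2) ℂ) : (Fin 2 → ℂ) →L[ℝ] (Fin 2 → ℂ) :=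
  LinearMap.toContinuousLinearMap (M.mulVecLin.restrictScalars ℝ)

lemma pdV_mulVec (M : Matrix (Fin 2) (Fin 2) ℂ) (hf : DifferentiableAt ℝ f x) :
    pdV j (fun y => M.mulVec (f y)) x = M.mulVec (pdV j f x) := by
  have h : fderiv ℝ (fun y => (mulVecCLM M) (f y)) x = (mulVecCLM M).comp (fderiv ℝ f x) :=
    ((mulVecCLM M).hasFDerivAt.comp x hf.hasFDerivAt).fderiv
  have e : (fun y => M.mulVec (f y)) = fun y => (mulVecCLM M) (f y) := rfl
  rw [pdV, e, h]; rfl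

lemma diff_mulVec (M : Matrix (Fin 2) (Fin 2) ℂ) (hf : DifferentiableAt ℝ f x) :
    DifferentiableAt ℝ (fun y => M.mulVec (f y)) x :=
  ((mulVecCLM M).differentiableAt).comp x hf

lemma pdC_ofReal {q : E3 → ℝ} (hq : DifferentiableAt ℝ q x) :
    pdC j (fun y => (q y : ℂ)) x = (pdR j q x : ℂ) := by
  have h : fderiv ℝ (fun y => Complex.ofRealCLM (q y)) x
      = Complex.ofRealCLM.comp (fderiv ℝ q x) :=
    (Complex.ofRealCLM.hasFDerivAt.comp x hq.hasFDerivAt).fderiv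
  have e : (fun y => (q y : ℂ)) = fun y => Complex.ofRealCLM (q y) := rfl
  rw [pdC, e, h, pdR]; rfl

lemma diff_ofReal {q : E3 → ℝ} (hq : DifferentiableAt ℝ q x) :
    DifferentiableAt ℝ (fun y => (q y : ℂ)) x :=
  Complex.ofRealCLM.differentiableAt.comp x hq

lemma diff_pdV (h : ContDiffAt ℝ 2 f x) : DifferentiableAt ℝ (pdV k f) x := by
  have h1 : ContDiffAt ℝ 1 (fderiv ℝ f) x := h.fderiv_right (by norm_num)
  exact ((ContinuousLinearMap.apply ℝ (Fin 2 → ℂ)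
      (EuclideanSpace.single k (1:ℝ))).differentiableAt).comp x (h1.differentiableAt one_ne_zero)

lemma pdV_symm (h : ContDiffAt ℝ 2 f x) : pdV j (pdV k f) x = pdV k (pdV j f) x := by
  have h1 : ContDiffAt ℝ 1 (fderiv ℝ f) x := h.fderiv_right (by norm_num)
  have hd : DifferentiableAt ℝ (fderiv ℝ f) x := h1.differentiableAt one_ne_zero
  have key : ∀ a b : Fin 3, pdV a (pdV b f) x
      = fderiv ℝ (fderiv ℝ f) x (EuclideanSpace.single a 1) (EuclideanSpace.single b 1) := by
    intro a b
    have e : pdV b f = fun y => (ContinuousLinearMap.apply ℝ (Fin 2 → ℂ)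
        (EuclideanSpace.single b (1:ℝ))) (fderiv ℝ f y) := rfl
    have hcomp : fderiv ℝ (pdV b f) x = (ContinuousLinearMap.apply ℝ (Fin 2 → ℂ)
        (EuclideanSpace.single b (1:ℝ))).comp (fderiv ℝ (fderiv ℝ f) x) := by
      rw [e]
      exact ((ContinuousLinearMap.apply ℝ (Fin 2 → ℂ)
        (EuclideanSpace.single b (1:ℝ))).hasFDerivAt.comp x hd.hasFDerivAt).fderiv
    rw [pdV, hcomp]; rfl
  rw [key, key]
  exact (h.isSymmSndFDerivAt (by simp)) _ _

lemma pauli_mulVec (a : Fin 3 → ℂ) (v : Fin 2 → ℂ) :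
    (pauli a).mulVec v = a 0 • σ1.mulVec v + a 1 • σ2.mulVec v + a 2 • σ3.mulVec v := by
  funext i
  fin_cases i <;>
    simp [pauli, σ1, σ2, σ3, Matrix.mulVec, dotProduct, Fin.sum_univ_two] <;> ring

variable {A : E3 → Fin 3 → ℝ}

lemma sigmaDA_congr (h : f =ᶠ[nhds x] g) : sigmaDA A f x = sigmaDA A g x := by
  unfold sigmaDA sigmaD
  rw [pdV_congr h, pdV_congr h, pdV_congr h, h.eq_of_nhds]

lemma sigmaDA_neg : sigmaDA A (fun y => -f y) x = -sigmaDA A f x := by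
  unfold sigmaDA sigmaD
  rw [pdV_neg, pdV_neg, pdV_neg]
  simp only [Matrix.mulVec_neg, ← neg_add, smul_neg]

end Helpers

section Algebra

set_option maxHeartbeats 2000000 in
/-- The purely algebraic (Pauli-matrix) identity behind the Lichnerowicz expansion. -/
lemma lich_alg (u d0 d1 d2 D00 D01 D02 D11 D12 D22 : Fin 2 → ℂ)
    (a : Fin 3 → ℂ) (b : Fin 3 → Fin 3 → ℂ) :
    (-Complex.I) • (
        σ1.mulVec ((-Complex.I) • (σ1.mulVec D00 + σ2.mulVec D01 + σ3.mulVec D02)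
          + ((b 0 0 • σ1.mulVec u + a 0 • σ1.mulVec d0)
            + (b 0 1 • σ2.mulVec u + a 1 • σ2.mulVec d0)
            + (b 0 2 • σ3.mulVec u + a 2 • σ3.mulVec d0)))
      + σ2.mulVec ((-Complex.I) • (σ1.mulVec D01 + σ2.mulVec D11 + σ3.mulVec D12)
          + ((b 1 0 • σ1.mulVec u + a 0 • σ1.mulVec d1)
            + (b 1 1 • σ2.mulVec u + a 1 • σ2.mulVec d1)
            + (b 1 2 • σ3.mulVec u + a 2 • σ3.mulVec d1)))
      + σ3.mulVec ((-Complex.I) • (σ1.mulVec D02 + σ2.mulVec D12 + σ3.mulVec D22)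
          + ((b 2 0 • σ1.mulVec u + a 0 • σ1.mulVec d2)
            + (b 2 1 • σ2.mulVec u + a 1 • σ2.mulVec d2)
            + (b 2 2 • σ3.mulVec u + a 2 • σ3.mulVec d2))))
    + (pauli a).mulVec ((-Complex.I) • (σ1.mulVec d0 + σ2.mulVec d1 + σ3.mulVec d2)
        + (pauli a).mulVec u)
    = -(D00 + D11 + D22)
      - (2 * Complex.I) • (a 0 • d0 + a 1 • d1 + a 2 • d2)
      + ((a 0 ^ 2 + a 1 ^ 2 + a 2 ^ 2) - Complex.I * (b 0 0 + b 1 1 + b 2 2)) • u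
      + (pauli ![b 1 2 - b 2 1, b 2 0 - b 0 2, b 0 1 - b 1 0]).mulVec u := by
  have hI3 : Complex.I ^ 3 = -Complex.I := by
    rw [(by norm_num : (3:ℕ) = 2+1), pow_succ, Complex.I_sq]; ring
  funext i
  fin_cases i <;>
    simp [pauli, σ1, σ2, σ3, Matrix.mulVec, dotProduct, Fin.sum_univ_two] <;>
      ring_nf <;> simp only [Complex.I_sq, Complex.I_pow_four, hI3] <;> ring

set_option maxHeartbeats 1000000 in
/-- The purely algebraic identity behind the Leibniz rule for `σ·(D+A)`. -/
lemma leib_alg (u d0 d1 d2 w : Fin 2 → ℂ) (c : ℂ) (p : Fin 3 → ℂ) :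
    (-Complex.I) • (σ1.mulVec (p 0 • u + c • d0) + σ2.mulVec (p 1 • u + c • d1)
        + σ3.mulVec (p 2 • u + c • d2)) + c • w
    = c • ((-Complex.I) • (σ1.mulVec d0 + σ2.mulVec d1 + σ3.mulVec d2) + w)
      + (pauli fun j => -Complex.I * p j).mulVec u := by
  funext i
  fin_cases i <;>
    simp [pauli, σ1, σ2, σ3, Matrix.mulVec, dotProduct, Fin.sum_univ_two,
      Matrix.vecHead, Matrix.vecTail] <;> ring

end Algebra

section Main

variable {A : E3 → Fin 3 → ℝ} {x : E3}

set_option maxHeartbeats 1000000 in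
/-- Leibniz rule for the magnetic Dirac operator applied to `(q y) • v y`. -/
lemma sigmaDA_smul {q : E3 → ℝ} {v : E3 → Fin 2 → ℂ}
    (hq : DifferentiableAt ℝ q x) (hv : DifferentiableAt ℝ v x) :
    sigmaDA A (fun y => (q y : ℂ) • v y) x
      = (q x : ℂ) • sigmaDA A v x + (sigmaDq q x).mulVec (v x) := by
  have hqC : DifferentiableAt ℝ (fun y => (q y : ℂ)) x := diff_ofReal hq
  unfold sigmaDA sigmaD sigmaDq
  rw [pdV_smul hqC hv, pdV_smul hqC hv, pdV_smul hqC hv, pdC_ofReal hq, pdC_ofReal hq,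
    pdC_ofReal hq, Matrix.mulVec_smul]
  exact leib_alg (v x) (pdV 0 v x) (pdV 1 v x) (pdV 2 v x)
    ((pauli fun j => (A x j : ℂ)).mulVec (v x)) ((q x : ℂ)) (fun j => ((pdR j q x : ℂ)))

set_option maxHeartbeats 2000000 in
/-- The Lichnerowicz-type expansion of the square of the magnetic Dirac operator. -/
lemma lich {up : E3 → Fin 2 → ℂ}
    (hA : ContDiffAt ℝ 1 A x) (hup : ContDiffAt ℝ 2 up x) :
    sigmaDA A (sigmaDA A up) x
      = -lapV up x - (2 * Complex.I) • (∑ j, ((A x j : ℂ)) • pdV j up x)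
        + ((∑ j, ((A x j : ℂ)) ^ 2) - Complex.I * (divA A x : ℂ)) • up x
        + (pauli fun j => ((curlA A x j : ℂ))).mulVec (up x) := by
  have hup1 : DifferentiableAt ℝ up x := hup.differentiableAt (by norm_num)
  have hAl : ∀ l : Fin 3, DifferentiableAt ℝ (fun y => A y l) x := fun l =>
    ((ContinuousLinearMap.proj l : (Fin 3 → ℝ) →L[ℝ] ℝ).differentiableAt).comp x
      (hA.differentiableAt one_ne_zero)
  have hAc : ∀ l : Fin 3, DifferentiableAt ℝ (fun y => (A y l : ℂ)) x := fun l =>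
    diff_ofReal (hAl l)
  have hd : ∀ k : Fin 3, DifferentiableAt ℝ (pdV k up) x := fun k => diff_pdV hup
  -- the Dirac operator of `up`, as an explicit sum of nice functions
  have hW : sigmaDA A up = fun y =>
      (-Complex.I) • (σ1.mulVec (pdV 0 up y) + σ2.mulVec (pdV 1 up y)
        + σ3.mulVec (pdV 2 up y))
      + ((fun y => (A y 0 : ℂ)) y • σ1.mulVec (up y) + (fun y => (A y 1 : ℂ)) y • σ2.mulVec (up y)
        + (fun y => (A y 2 : ℂ)) y • σ3.mulVec (up y)) := by
    funext y
    show sigmaD up y + (pauli fun j => (A y j : ℂ)).mulVec (up y) = _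
    rw [pauli_mulVec]
    rfl
  have hdiff1 : DifferentiableAt ℝ (fun y =>
      (-Complex.I) • (σ1.mulVec (pdV 0 up y) + σ2.mulVec (pdV 1 up y)
        + σ3.mulVec (pdV 2 up y))) x :=
    (((diff_mulVec σ1 (hd 0)).add (diff_mulVec σ2 (hd 1))).add
      (diff_mulVec σ3 (hd 2))).fun_const_smul _
  have hs : ∀ l : Fin 3, ∀ M : Matrix (Fin 2) (Fin 2) ℂ,
      DifferentiableAt ℝ (fun y => (A y l : ℂ) • M.mulVec (up y)) x := fun l M =>
    (hAc l).smul (diff_mulVec M hup1)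
  have hdiff2 : DifferentiableAt ℝ (fun y =>
      (fun y => (A y 0 : ℂ)) y • σ1.mulVec (up y) + (fun y => (A y 1 : ℂ)) y • σ2.mulVec (up y)
        + (fun y => (A y 2 : ℂ)) y • σ3.mulVec (up y)) x :=
    ((hs 0 σ1).add (hs 1 σ2)).add (hs 2 σ3)
  -- compute the partial derivatives of `sigmaDA A up` at `x`
  have hpd : ∀ j : Fin 3, pdV j (sigmaDA A up) x
      = (-Complex.I) • (σ1.mulVec (pdV j (pdV 0 up) x) + σ2.mulVec (pdV j (pdV 1 up) x)
          + σ3.mulVec (pdV j (pdV 2 up) x))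
        + (((pdR j (fun y => A y 0) x : ℂ) • σ1.mulVec (up x)
              + (A x 0 : ℂ) • σ1.mulVec (pdV j up x))
          + ((pdR j (fun y => A y 1) x : ℂ) • σ2.mulVec (up x)
              + (A x 1 : ℂ) • σ2.mulVec (pdV j up x))
          + ((pdR j (fun y => A y 2) x : ℂ) • σ3.mulVec (up x)
              + (A x 2 : ℂ) • σ3.mulVec (pdV j up x))) := by
    intro j
    rw [hW, pdV_add hdiff1 hdiff2, pdV_const_smul _
        (((diff_mulVec σ1 (hd 0)).fun_add (diff_mulVec σ2 (hd 1))).fun_add (diff_mulVec σ3 (hd 2))),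
      pdV_add ((diff_mulVec σ1 (hd 0)).fun_add (diff_mulVec σ2 (hd 1))) (diff_mulVec σ3 (hd 2)),
      pdV_add (diff_mulVec σ1 (hd 0)) (diff_mulVec σ2 (hd 1)),
      pdV_mulVec σ1 (hd 0), pdV_mulVec σ2 (hd 1), pdV_mulVec σ3 (hd 2),
      pdV_add ((hs 0 σ1).fun_add (hs 1 σ2)) (hs 2 σ3),
      pdV_add (hs 0 σ1) (hs 1 σ2),
      pdV_smul (hAc 0) (diff_mulVec σ1 hup1),
      pdV_smul (hAc 1) (diff_mulVec σ2 hup1),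
      pdV_smul (hAc 2) (diff_mulVec σ3 hup1),
      pdV_mulVec σ1 hup1, pdV_mulVec σ2 hup1, pdV_mulVec σ3 hup1,
      pdC_ofReal (hAl 0), pdC_ofReal (hAl 1), pdC_ofReal (hAl 2)]
  -- now expand everything
  have goal1 : sigmaDA A (sigmaDA A up) x
      = (-Complex.I) • (σ1.mulVec (pdV 0 (sigmaDA A up) x) + σ2.mulVec (pdV 1 (sigmaDA A up) x)
          + σ3.mulVec (pdV 2 (sigmaDA A up) x))
        + (pauli fun l => (A x l : ℂ)).mulVec
            ((-Complex.I) • (σ1.mulVec (pdV 0 up x) + σ2.mulVec (pdV 1 up x)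
              + σ3.mulVec (pdV 2 up x))
            + (pauli fun l => (A x l : ℂ)).mulVec (up x)) := rfl
  rw [goal1, hpd 0, hpd 1, hpd 2, pdV_symm hup (j := 1) (k := 0), pdV_symm hup (j := 2) (k := 0),
    pdV_symm hup (j := 2) (k := 1)]
  have halg := lich_alg (up x) (pdV 0 up x) (pdV 1 up x) (pdV 2 up x)
    (pdV 0 (pdV 0 up) x) (pdV 0 (pdV 1 up) x) (pdV 0 (pdV 2 up) x)
    (pdV 1 (pdV 1 up) x) (pdV 1 (pdV 2 up) x) (pdV 2 (pdV 2 up) x)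
    (fun l => (A x l : ℂ)) (fun j l => (pdR j (fun y => A y l) x : ℂ))
  rw [halg]
  have hlap : lapV up x = pdV 0 (pdV 0 up) x + pdV 1 (pdV 1 up) x + pdV 2 (pdV 2 up) x := by
    simp [lapV, Fin.sum_univ_three]
  have hsum : (∑ j, ((A x j : ℂ)) • pdV j up x)
      = (A x 0 : ℂ) • pdV 0 up x + (A x 1 : ℂ) • pdV 1 up x + (A x 2 : ℂ) • pdV 2 up x := by
    simp [Fin.sum_univ_three]
  have hsq : (∑ j, ((A x j : ℂ)) ^ 2) = (A x 0 : ℂ)^2 + (A x 1 : ℂ)^2 + (A x 2 : ℂ)^2 := by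
    simp [Fin.sum_univ_three]
  have hdiv : (divA A x : ℂ) = (pdR 0 (fun y => A y 0) x : ℂ) + (pdR 1 (fun y => A y 1) x : ℂ)
      + (pdR 2 (fun y => A y 2) x : ℂ) := by
    simp [divA, Fin.sum_univ_three]
  have hcurl : (fun j => ((curlA A x j : ℂ)))
      = ![(pdR 1 (fun y => A y 2) x : ℂ) - (pdR 2 (fun y => A y 1) x : ℂ),
          (pdR 2 (fun y => A y 0) x : ℂ) - (pdR 0 (fun y => A y 2) x : ℂ),
          (pdR 0 (fun y => A y 1) x : ℂ) - (pdR 1 (fun y => A y 0) x : ℂ)] := by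
    funext j
    fin_cases j <;> simp [curlA]
  rw [hlap, hsum, hsq, hdiv, hcurl]

end Main

/-- decoupling of the Dirac system into a second-order equation where `q₋`
does not vanish. -/
theorem dirac_decoupling
    (U : Set E3) (hU : IsOpen U) (A : E3 → Fin 3 → ℝ) (qp qm : E3 → ℝ)
    (up um : E3 → Fin 2 → ℂ)
    (hA : ContDiffOn ℝ 1 A U) (hqp : ContDiffOn ℝ 1 qp U) (hqm : ContDiffOn ℝ 1 qm U)
    (hqm0 : ∀ x ∈ U, qm x ≠ 0)
    (hup : ContDiffOn ℝ 2 up U) (hum : ContDiffOn ℝ 2 um U)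
    (heq1 : ∀ x ∈ U, sigmaDA A up x + (qm x : ℂ) • um x = 0)
    (heq2 : ∀ x ∈ U, sigmaDA A um x + (qp x : ℂ) • up x = 0) :
    ∀ x ∈ U,
      sigmaDA A (fun y => ((qm y : ℂ))⁻¹ • sigmaDA A up y) x - (qp x : ℂ) • up x = 0 ∧
      -lapV up x
        - (2 * Complex.I) • (∑ j, ((A x j : ℂ)) • pdV j up x)
        + ((∑ j, ((A x j : ℂ)) ^ 2) - Complex.I * (divA A x : ℂ)
            - (qp x : ℂ) * (qm x : ℂ)) • up x
        + (pauli fun j => ((curlA A x j : ℂ))).mulVec (up x)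
        - ((qm x : ℂ))⁻¹ • (sigmaDq qm x).mulVec (sigmaDA A up x) = 0 := by
  intro x hx
  have hUx : U ∈ nhds x := hU.mem_nhds hx
  have hA' : ContDiffAt ℝ 1 A x := hA.contDiffAt hUx
  have hup' : ContDiffAt ℝ 2 up x := hup.contDiffAt hUx
  have hum' : ContDiffAt ℝ 2 um x := hum.contDiffAt hUx
  have hum1 : DifferentiableAt ℝ um x := hum'.differentiableAt (by norm_num)
  have hqmd : DifferentiableAt ℝ qm x := (hqm.contDiffAt hUx).differentiableAt one_ne_zero
  have hqx : (qm x : ℂ) ≠ 0 := by exact_mod_cast hqm0 x hx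
  have h2x : sigmaDA A um x = -((qp x : ℂ) • up x) :=
    eq_neg_of_add_eq_zero_left (heq2 x hx)
  -- Part 1
  have hfg : (fun y => ((qm y : ℂ))⁻¹ • sigmaDA A up y) =ᶠ[nhds x] (fun y => -um y) := by
    filter_upwards [hUx] with y hy
    have h1 : sigmaDA A up y = -((qm y : ℂ) • um y) := eq_neg_of_add_eq_zero_left (heq1 y hy)
    have hqy : (qm y : ℂ) ≠ 0 := by exact_mod_cast hqm0 y hy
    rw [h1, smul_neg, smul_smul, inv_mul_cancel₀ hqy, one_smul]
  have e1 : sigmaDA A (fun y => ((qm y : ℂ))⁻¹ • sigmaDA A up y) x = (qp x : ℂ) • up x := by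
    rw [sigmaDA_congr hfg, sigmaDA_neg, h2x, neg_neg]
  refine ⟨by rw [e1, sub_self], ?_⟩
  -- Part 2
  have humx : um x = -(((qm x : ℂ))⁻¹ • sigmaDA A up x) := by
    have h1 : (qm x : ℂ) • um x = -(sigmaDA A up x) :=
      eq_neg_of_add_eq_zero_right (heq1 x hx)
    calc um x = ((qm x : ℂ))⁻¹ • ((qm x : ℂ) • um x) := by
            rw [smul_smul, inv_mul_cancel₀ hqx, one_smul]
      _ = -(((qm x : ℂ))⁻¹ • sigmaDA A up x) := by rw [h1, smul_neg]
  have hWeq : (fun y => sigmaDA A up y) =ᶠ[nhds x] (fun y => -((qm y : ℂ) • um y)) := by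
    filter_upwards [hUx] with y hy
    exact eq_neg_of_add_eq_zero_left (heq1 y hy)
  have key : sigmaDA A (sigmaDA A up) x
      = ((qp x : ℂ) * (qm x : ℂ)) • up x
        + ((qm x : ℂ))⁻¹ • (sigmaDq qm x).mulVec (sigmaDA A up x) := by
    have e2 : sigmaDA A (sigmaDA A up) x
        = -((qm x : ℂ) • sigmaDA A um x + (sigmaDq qm x).mulVec (um x)) := by
      rw [sigmaDA_congr hWeq, sigmaDA_neg, sigmaDA_smul hqmd hum1]
    rw [e2, h2x, humx, Matrix.mulVec_neg, Matrix.mulVec_smul]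
    simp only [smul_neg, neg_add, neg_neg, smul_smul]
    rw [mul_comm ((qm x : ℂ)) ((qp x : ℂ))]
  have hl := lich (A := A) (x := x) hA' hup'
  funext i
  have h1i := congrFun hl i
  have h2i := congrFun key i
  simp only [Pi.add_apply, Pi.sub_apply, Pi.neg_apply, Pi.smul_apply, smul_eq_mul,
    Finset.sum_apply, Pi.zero_apply, Fin.sum_univ_three] at h1i h2i ⊢
  linear_combination h2i - h1i
end
end
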